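/- arXiv:math/0408290 — 3 statements merged into one kernel-verified Lean document; each statement's English description precedes it below -/
import Mathlib

section
/- Let U ⊆ ℂ be open, let F : U → ℂ be holomorphic, and let X ⊆ U be compact. Let Q = {z ∈ X : F^n(z) ∈ X for all n ≥ 0} be the maximal invariant set. If there exist C > 0 and λ > 1 such that |(F^n)'(z)| ≥ C λ^n for all z ∈ Q and all n ≥ 0, then Q has empty interior. -/
open Function Set Metric

theorem maximal_invariant_set_empty_interior_of_hyperbolic
    (U : Set ℂ) (hU : IsOpen U) (F : ℂ → ℂ) (hF : DifferentiableOn ℂ F U)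
    (X : Set ℂ) (hXc : IsCompact X) (hXU : X ⊆ U)
    (hhyp : ∃ C > (0 : ℝ), ∃ lam > (1 : ℝ),
      ∀ z ∈ {z : ℂ | ∀ n : ℕ, F^[n] z ∈ X}, ∀ n : ℕ,
        C * lam ^ n ≤ ‖deriv (F^[n]) z‖) :
    interior {z : ℂ | ∀ n : ℕ, F^[n] z ∈ X} = ∅ := by
  obtain ⟨C, hC, lam, hlam, hbound⟩ := hhyp
  set Q : Set ℂ := {z : ℂ | ∀ n : ℕ, F^[n] z ∈ X} with hQ
  by_contra hne
  obtain ⟨z₀, hz₀⟩ := nonempty_iff_ne_empty.2 hne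
  obtain ⟨r, hr, hball⟩ := Metric.isOpen_iff.1 isOpen_interior z₀ hz₀
  have hballQ : ball z₀ r ⊆ Q := hball.trans interior_subset
  -- X is bounded
  obtain ⟨M, hM⟩ := hXc.isBounded.subset_closedBall 0
  -- each iterate maps Q into Q and is differentiable on the ball
  have hQmem : ∀ z ∈ Q, ∀ n : ℕ, F^[n] z ∈ Q := by
    intro z hz n m
    rw [← Function.iterate_add_apply]
    exact hz (m + n)
  have hdiff : ∀ n : ℕ, DifferentiableOn ℂ (F^[n]) (ball z₀ r) := by
    intro n
    induction n with
    | zero => simpa using differentiableOn_id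
    | succ n ih =>
      have : DifferentiableOn ℂ (F ∘ F^[n]) (ball z₀ r) := by
        apply hF.comp ih
        intro z hz
        exact hXU ((hQmem z (hballQ hz) n) 0)
      rw [Function.iterate_succ']; exact this
  -- Schwarz-type estimate: derivative at z₀ bounded by (2M+1)/r
  have hM0 : (0 : ℝ) ≤ M := by
    have := hM (hballQ (mem_ball_self hr) 0)
    simpa using (dist_nonneg.trans this)
  have hest : ∀ n : ℕ, ‖deriv (F^[n]) z₀‖ ≤ (2 * M + 1) / r := by
    intro n
    apply Complex.norm_deriv_le_div_of_mapsTo_ball (hdiff n) _ hr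
    intro z hz
    have h1 : F^[n] z ∈ closedBall (0 : ℂ) M := hM (hballQ hz n)
    have h2 : F^[n] z₀ ∈ closedBall (0 : ℂ) M := hM (hballQ (mem_ball_self hr) n)
    simp only [mem_closedBall] at h1 h2 ⊢
    calc dist (F^[n] z) (F^[n] z₀)
        ≤ dist (F^[n] z) 0 + dist (0 : ℂ) (F^[n] z₀) := dist_triangle _ _ _
      _ ≤ M + M := by rw [dist_comm (0 : ℂ)]; exact add_le_add h1 h2
      _ ≤ 2 * M + 1 := by linarith
  -- contradiction with exponential growth
  have htend : Filter.Tendsto (fun n : ℕ => C * lam ^ n) Filter.atTop Filter.atTop :=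
    (tendsto_pow_atTop_atTop_of_one_lt hlam).const_mul_atTop hC
  obtain ⟨n, hn⟩ := (htend.eventually_gt_atTop ((2 * M + 1) / r)).exists
  have := hbound z₀ (hballQ (mem_ball_self hr)) n
  linarith [hest n]
end

section
/- Let f be holomorphic on an open set U ⊆ ℂ, let W ⊆ ℂ be open, and let X ⊆ Y ⊆ W where Y is a nonempty connected open set and X is nonempty. Assume the pair (Y,X) is admissible: every copy of Y (of any depth) that intersects X is contained in Y. Let g be an inverse branch of f^k on W and h an inverse branch of f^l on W with k ≤ l. If g(X) ∩ h(Y) ≠ ∅, then h(Y) ⊆ g(Y). -/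
open Set Function

/-- An inverse branch of `f^k` on `W`: a holomorphic map `g : W → ℂ` such that
`f^j(g(z)) ∈ U` for `0 ≤ j ≤ k-1` and `f^k(g(z)) = z` for all `z ∈ W`. -/
def InvBranch (f : ℂ → ℂ) (U W : Set ℂ) (k : ℕ) (g : ℂ → ℂ) : Prop :=
  DifferentiableOn ℂ g W ∧ ∀ z ∈ W, (∀ j < k, f^[j] (g z) ∈ U) ∧ f^[k] (g z) = z

/-- A pair `X ⊆ Y` is admissible if every copy of `Y` (of any depth) that intersects `X`
is contained in `Y`. -/
def AdmissiblePair (f : ℂ → ℂ) (U W X Y : Set ℂ) : Prop :=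
  ∀ k : ℕ, ∀ g : ℂ → ℂ, InvBranch f U W k g → (g '' Y ∩ X).Nonempty → g '' Y ⊆ Y

lemma analyticAt_iter {f : ℂ → ℂ} {U : Set ℂ} (hU : IsOpen U) (hf : DifferentiableOn ℂ f U)
    {k : ℕ} {w : ℂ} (hw : ∀ j < k, f^[j] w ∈ U) : AnalyticAt ℂ f^[k] w := by
  induction k with
  | zero => simpa using analyticAt_id
  | succ n ih =>
    rw [Function.iterate_succ']
    exact (hf.analyticAt (hU.mem_nhds (hw n n.lt_succ_self))).comp
      (ih fun j hj => hw j (hj.trans n.lt_succ_self))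

theorem copies_nested_of_admissible
    (f : ℂ → ℂ) (U : Set ℂ) (hU : IsOpen U) (hf : DifferentiableOn ℂ f U)
    (W : Set ℂ) (hW : IsOpen W)
    (X Y : Set ℂ) (hXY : X ⊆ Y) (hYW : Y ⊆ W)
    (hYopen : IsOpen Y) (hYconn : IsConnected Y) (hXne : X.Nonempty)
    (hadm : AdmissiblePair f U W X Y)
    (k l : ℕ) (hkl : k ≤ l) (g h : ℂ → ℂ)
    (hg : InvBranch f U W k g) (hh : InvBranch f U W l h)
    (hmeet : (g '' X ∩ h '' Y).Nonempty) :
    h '' Y ⊆ g '' Y := by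
  obtain ⟨w, ⟨x₀, hx₀X, hgx₀⟩, y₀, hy₀Y, hhy₀⟩ := hmeet
  -- h' = f^[k] ∘ h is an inverse branch of f^[l-k]
  set h' : ℂ → ℂ := fun z => f^[k] (h z) with hh'def
  have hh'branch : InvBranch f U W (l - k) h' := by
    constructor
    · intro z hz
      have hU' : ∀ j < k, f^[j] (h z) ∈ U := fun j hj => (hh.2 z hz).1 j (hj.trans_le hkl)
      exact ((analyticAt_iter hU hf hU').differentiableAt.comp z
        ((hh.1 z hz).differentiableAt (hW.mem_nhds hz))).differentiableWithinAt
    · intro z hz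
      refine ⟨fun j hj => ?_, ?_⟩
      · have : f^[j + k] (h z) = f^[j] (f^[k] (h z)) := Function.iterate_add_apply f j k (h z)
        rw [hh'def]; simp only
        rw [← this]
        exact (hh.2 z hz).1 (j + k) (by omega)
      · show f^[l - k] (f^[k] (h z)) = z
        rw [← Function.iterate_add_apply, Nat.sub_add_cancel hkl]
        exact (hh.2 z hz).2
  have hx₀W : x₀ ∈ W := hYW (hXY hx₀X)
  have hkey : h' y₀ = x₀ := by
    have h1 : f^[k] (g x₀) = x₀ := (hg.2 x₀ hx₀W).2
    show f^[k] (h y₀) = x₀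
    rw [hhy₀, ← hgx₀]; exact h1
  have hsub : h' '' Y ⊆ Y :=
    hadm (l - k) h' hh'branch ⟨x₀, ⟨y₀, hy₀Y, hkey⟩, hx₀X⟩
  -- the set where h = g ∘ h'
  set S : Set ℂ := {z | z ∈ Y ∧ h z = g (h' z)} with hSdef
  have hcontgh' : ∀ z ∈ Y, ContinuousAt (fun z => g (h' z)) z := by
    intro z hz
    have hz' : h' z ∈ W := hYW (hsub ⟨z, hz, rfl⟩)
    exact (((hg.1 (h' z) hz').differentiableAt (hW.mem_nhds hz')).continuousAt).comp
      (((hh'branch.1 z (hYW hz)).differentiableAt (hW.mem_nhds (hYW hz))).continuousAt)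
  have hconth : ∀ z ∈ Y, ContinuousAt h z := fun z hz =>
    ((hh.1 z (hYW hz)).differentiableAt (hW.mem_nhds (hYW hz))).continuousAt
  -- S is open
  have hSopen : IsOpen S := by
    rw [isOpen_iff_mem_nhds]
    rintro z₀ ⟨hz₀Y, heq⟩
    set w₀ := h z₀ with hw₀
    -- f^[l] has nonzero strict derivative at w₀
    have hanaly : AnalyticAt ℂ f^[l] w₀ := analyticAt_iter hU hf (hh.2 z₀ (hYW hz₀Y)).1
    have hstr : HasStrictDerivAt f^[l] (fderiv ℂ f^[l] w₀ 1) w₀ :=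
      hanaly.hasStrictFDerivAt.hasStrictDerivAt
    have hhdiff : HasDerivAt h (deriv h z₀) z₀ :=
      ((hh.1 z₀ (hYW hz₀Y)).differentiableAt (hW.mem_nhds (hYW hz₀Y))).hasDerivAt
    have hcomp : HasDerivAt (fun z => f^[l] (h z)) (fderiv ℂ f^[l] w₀ 1 * deriv h z₀) z₀ :=
      hstr.hasDerivAt.comp z₀ hhdiff
    have hcongr : HasDerivAt (fun z => f^[l] (h z)) 1 z₀ := by
      have : (fun z : ℂ => z) =ᶠ[nhds z₀] fun z => f^[l] (h z) := by
        filter_upwards [hW.mem_nhds (hYW hz₀Y)] with z hz using ((hh.2 z hz).2).symm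
      exact (hasDerivAt_id z₀).congr_of_eventuallyEq this.symm
    have hmul : fderiv ℂ f^[l] w₀ 1 * deriv h z₀ = 1 := hcomp.unique hcongr
    have hc : fderiv ℂ f^[l] w₀ 1 ≠ 0 := left_ne_zero_of_mul_eq_one hmul
    -- the local inverse
    have hLI := (hstr.hasStrictFDerivAt_equiv hc).eventually_left_inverse
    set LI := (hstr.hasStrictFDerivAt_equiv hc).localInverse f^[l] _ w₀ with hLIdef
    have h1 : ∀ᶠ z in nhds z₀, LI (f^[l] (h z)) = h z :=
      (hconth z₀ hz₀Y).eventually (by simpa [hw₀] using hLI)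
    have h2 : ∀ᶠ z in nhds z₀, LI (f^[l] (g (h' z))) = g (h' z) := by
      have hct : ContinuousAt (fun z => g (h' z)) z₀ := hcontgh' z₀ hz₀Y
      have hval : g (h' z₀) = w₀ := heq.symm
      have hLI' : ∀ᶠ y in nhds (g (h' z₀)), LI (f^[l] y) = y := by
        rw [hval]; simpa using hLI
      exact hct.tendsto.eventually hLI'
    filter_upwards [h1, h2, hYopen.mem_nhds hz₀Y] with z hz1 hz2 hzY
    refine ⟨hzY, ?_⟩
    have hfl_h : f^[l] (h z) = z := (hh.2 z (hYW hzY)).2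
    have hh'zY : h' z ∈ Y := hsub ⟨z, hzY, rfl⟩
    have hfl_g : f^[l] (g (h' z)) = z := by
      have e1 : f^[k] (g (h' z)) = h' z := (hg.2 (h' z) (hYW hh'zY)).2
      have e2 : f^[l - k] (h' z) = z := (hh'branch.2 z (hYW hzY)).2
      calc f^[l] (g (h' z)) = f^[l - k] (f^[k] (g (h' z))) := by
            rw [← Function.iterate_add_apply, Nat.sub_add_cancel hkl]
        _ = z := by rw [e1, e2]
    rw [← hz1, ← hz2, hfl_h, hfl_g]
  -- Y \ S is open
  have hTopen : IsOpen {z | z ∈ Y ∧ h z ≠ g (h' z)} := by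
    rw [isOpen_iff_mem_nhds]
    rintro z₀ ⟨hz₀Y, hne⟩
    have : ContinuousAt (fun z => h z - g (h' z)) z₀ :=
      (hconth z₀ hz₀Y).sub (hcontgh' z₀ hz₀Y)
    have hne' : h z₀ - g (h' z₀) ≠ 0 := sub_ne_zero.mpr hne
    filter_upwards [this.eventually_ne hne', hYopen.mem_nhds hz₀Y] with z hz1 hz2
    exact ⟨hz2, sub_ne_zero.mp hz1⟩
  -- connectedness: Y ⊆ S
  have hYS : Y ⊆ S := by
    by_contra hcon
    obtain ⟨z₁, hz₁Y, hz₁S⟩ := not_subset.mp hcon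
    have h1 : Y ⊆ S ∪ {z | z ∈ Y ∧ h z ≠ g (h' z)} := by
      intro z hz
      by_cases he : h z = g (h' z)
      · exact Or.inl ⟨hz, he⟩
      · exact Or.inr ⟨hz, he⟩
    have h2 : (Y ∩ S).Nonempty := ⟨y₀, hy₀Y, hy₀Y, by
      show h y₀ = g (h' y₀)
      rw [hhy₀, hkey, hgx₀]⟩
    have h3 : (Y ∩ {z | z ∈ Y ∧ h z ≠ g (h' z)}).Nonempty := by
      refine ⟨z₁, hz₁Y, hz₁Y, fun he => hz₁S ⟨hz₁Y, he⟩⟩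
    obtain ⟨z, _, ⟨_, he⟩, ⟨_, hne⟩⟩ :=
      hYconn.isPreconnected S _ hSopen hTopen h1 h2 h3
    exact hne he
  -- conclude
  rintro _ ⟨z, hzY, rfl⟩
  have := (hYS hzY).2
  exact ⟨h' z, hsub ⟨z, hzY, rfl⟩, this.symm⟩
end

section
/- Let f be holomorphic on an open set U ⊆ ℂ, let W ⊆ ℂ be open, and let X ⊆ Y ⊆ W where X is a nonempty connected open set and Y is a connected open set. Assume the pair (Y,X) is admissible. Let I be a nonempty index set, for each i ∈ I let g_i be an inverse branch of f^{k_i} on W, and assume that D = ⋃_{i ∈ I} g_i(X) is connected. If i₀ ∈ I satisfies k_{i₀} ≤ k_i for all i ∈ I, then D ⊆ g_{i₀}(Y). -/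
open Set Function Topology Filter

namespace IBAux

variable {f : ℂ → ℂ} {U W X Y : Set ℂ}


variable {f : ℂ → ℂ} {U W X Y : Set ℂ}

/-- The set where the first `k` iterates of `f` stay in `U`. -/
def goodSet (f : ℂ → ℂ) (U : Set ℂ) (k : ℕ) : Set ℂ := {z | ∀ j < k, f^[j] z ∈ U}

lemma goodSet_antitone {m n : ℕ} (h : m ≤ n) : goodSet f U n ⊆ goodSet f U m :=
  fun _ hz j hj => hz j (lt_of_lt_of_le hj h)

lemma goodSet_isOpen_diff (hU : IsOpen U) (hf : DifferentiableOn ℂ f U) :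
    ∀ k : ℕ, IsOpen (goodSet f U k) ∧ DifferentiableOn ℂ f^[k] (goodSet f U k) := by
  intro k
  induction k with
  | zero =>
    constructor
    · convert isOpen_univ using 1
      ext z; simp [goodSet]
    · simp only [Function.iterate_zero]
      exact differentiableOn_id
  | succ n ih =>
    have hset : goodSet f U (n + 1) = goodSet f U n ∩ f^[n] ⁻¹' U := by
      ext z
      constructor
      · intro h
        exact ⟨fun j hj => h j (by omega), h n (by omega)⟩
      · rintro ⟨h1, h2⟩ j hj
        rcases Nat.lt_succ_iff_lt_or_eq.mp hj with h | h
        · exact h1 j h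
        · subst h; exact h2
    constructor
    · rw [hset]
      exact ih.2.continuousOn.isOpen_inter_preimage ih.1 hU
    · have hdm : DifferentiableOn ℂ f^[n] (goodSet f U (n + 1)) :=
        ih.2.mono (goodSet_antitone (by omega))
      have hmap : MapsTo f^[n] (goodSet f U (n + 1)) U := fun z hz => hz n (by omega)
      have : DifferentiableOn ℂ (f ∘ f^[n]) (goodSet f U (n + 1)) :=
        hf.comp hdm hmap
      rwa [← Function.iterate_succ'] at this

lemma branch_mem_goodSet {k : ℕ} {g : ℂ → ℂ} (hg : InvBranch f U W k g)
    {z : ℂ} (hz : z ∈ W) : g z ∈ goodSet f U k :=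
  fun j hj => (hg.2 z hz).1 j hj

lemma branch_apply {k : ℕ} {g : ℂ → ℂ} (hg : InvBranch f U W k g)
    {z : ℂ} (hz : z ∈ W) : f^[k] (g z) = z := (hg.2 z hz).2

/-- Tail of a branch: composing with a forward iterate. -/
lemma branch_tail (hU : IsOpen U) (hf : DifferentiableOn ℂ f U)
    {t e : ℕ} {g : ℂ → ℂ} (hg : InvBranch f U W (t + e) g) :
    InvBranch f U W e (fun z => f^[t] (g z)) := by
  constructor
  · exact (goodSet_isOpen_diff hU hf t).2.comp hg.1
      (fun z hz => goodSet_antitone (by omega) (branch_mem_goodSet hg hz))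
  · intro z hz
    constructor
    · intro j hj
      rw [← Function.iterate_add_apply]
      exact (hg.2 z hz).1 (j + t) (by omega)
    · rw [← Function.iterate_add_apply]
      have : e + t = t + e := by omega
      rw [this]
      exact (hg.2 z hz).2


/-- Two holomorphic right inverses of `f^[d]` agreeing at a point of a preconnected open set
agree on it. -/
lemma eqOn_of_rightInv (hU : IsOpen U) (hf : DifferentiableOn ℂ f U) (hW : IsOpen W)
    {d : ℕ} {g : ℂ → ℂ} (hg : InvBranch f U W d g)
    {T : Set ℂ} (hT : IsOpen T) (hTc : IsPreconnected T) (hTW : T ⊆ W)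
    {ψ : ℂ → ℂ} (hψ : DifferentiableOn ℂ ψ T) (hψr : ∀ t ∈ T, f^[d] (ψ t) = t)
    {y₀ : ℂ} (hy₀ : y₀ ∈ T) (hag : ψ y₀ = g y₀) : EqOn g ψ T := by
  have hy₀W : y₀ ∈ W := hTW hy₀
  set p := g y₀ with hp
  have hpV : p ∈ goodSet f U d := branch_mem_goodSet hg hy₀W
  obtain ⟨hVopen, hVdiff⟩ := goodSet_isOpen_diff hU hf d
  -- analyticity of f^[d] at p
  have hFa : AnalyticAt ℂ f^[d] p := (hVdiff.analyticOnNhd hVopen) p hpV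
  -- chain rule: deriv f^[d] p ≠ 0
  have hgd : HasDerivAt g (deriv g y₀) y₀ :=
    (hg.1.differentiableAt (hW.mem_nhds hy₀W)).hasDerivAt
  have hFd : HasDerivAt f^[d] (deriv f^[d] p) p :=
    (hVdiff.differentiableAt (hVopen.mem_nhds hpV)).hasDerivAt
  have hcomp : HasDerivAt (fun z => f^[d] (g z)) (deriv f^[d] p * deriv g y₀) y₀ :=
    hFd.comp y₀ hgd
  have hid : (fun z => f^[d] (g z)) =ᶠ[𝓝 y₀] id :=
    Filter.eventuallyEq_of_mem (hW.mem_nhds hy₀W) (fun z hz => (hg.2 z hz).2)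
  have huniq : deriv f^[d] p * deriv g y₀ = 1 :=
    (hcomp.congr_of_eventuallyEq hid.symm).unique (hasDerivAt_id y₀)
  have hne : deriv f^[d] p ≠ 0 := left_ne_zero_of_mul_eq_one huniq
  -- strict derivative and local inverse
  have hstrict : HasStrictDerivAt f^[d] (deriv f^[d] p) p := by
    have h1 := hFa.hasStrictFDerivAt.hasStrictDerivAt
    have h2 : (fderiv ℂ f^[d] p : ℂ → ℂ) 1 = deriv f^[d] p := fderiv_apply_one_eq_deriv
    rwa [h2] at h1
  have hfe := hstrict.hasStrictFDerivAt_equiv hne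
  have hev : ∀ᶠ w in 𝓝 p, hfe.localInverse _ _ _ (f^[d] w) = w :=
    hfe.eventually_left_inverse
  set LI := hfe.localInverse _ _ _ with hLI
  -- eventual equality at y₀
  have hgc : ContinuousAt g y₀ := (hg.1.differentiableAt (hW.mem_nhds hy₀W)).continuousAt
  have hψc : ContinuousAt ψ y₀ := (hψ.differentiableAt (hT.mem_nhds hy₀)).continuousAt
  have hev1 : ∀ᶠ t in 𝓝 y₀, LI (f^[d] (g t)) = g t := by
    have := hgc.preimage_mem_nhds (hev : {w | LI (f^[d] w) = w} ∈ 𝓝 p)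
    exact Filter.eventually_of_mem this (fun t ht => ht)
  have hev2 : ∀ᶠ t in 𝓝 y₀, LI (f^[d] (ψ t)) = ψ t := by
    have hψp : ψ y₀ = p := by rw [hag]
    have := hψc.preimage_mem_nhds (by rw [hψp] at *; exact (hev : {w | LI (f^[d] w) = w} ∈ 𝓝 p))
    exact Filter.eventually_of_mem this (fun t ht => ht)
  have hevW : ∀ᶠ t in 𝓝 y₀, t ∈ W := hW.mem_nhds hy₀W
  have hevT : ∀ᶠ t in 𝓝 y₀, t ∈ T := hT.mem_nhds hy₀
  have heq : g =ᶠ[𝓝 y₀] ψ := by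
    filter_upwards [hev1, hev2, hevW, hevT] with t h1 h2 hWt hTt
    have e1 : f^[d] (g t) = t := (hg.2 t hWt).2
    have e2 : f^[d] (ψ t) = t := hψr t hTt
    rw [e1] at h1; rw [e2] at h2
    rw [← h1, ← h2]
  -- identity theorem
  have hga : AnalyticOnNhd ℂ g T := (hg.1.mono hTW).analyticOnNhd hT
  have hψa : AnalyticOnNhd ℂ ψ T := hψ.analyticOnNhd hT
  exact hga.eqOn_of_preconnected_of_eventuallyEq hψa hTc hy₀ heq

/-- Branches are open maps on open subsets of `W`. -/
lemma branch_image_isOpen (hU : IsOpen U) (hf : DifferentiableOn ℂ f U) (hW : IsOpen W)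
    {d : ℕ} {g : ℂ → ℂ} (hg : InvBranch f U W d g)
    {O : Set ℂ} (hO : IsOpen O) (hOW : O ⊆ W) : IsOpen (g '' O) := by
  rw [isOpen_iff_mem_nhds]
  rintro _ ⟨z₀, hz₀, rfl⟩
  have hga : AnalyticAt ℂ g z₀ := (hg.1.analyticOnNhd hW) z₀ (hOW hz₀)
  rcases hga.eventually_constant_or_nhds_le_map_nhds with hconst | hle
  · exfalso
    have h2 : ∀ᶠ z in 𝓝 z₀, z ∈ O := hO.mem_nhds hz₀
    have h3 : ∀ᶠ z in 𝓝[≠] z₀, g z = g z₀ ∧ z ∈ O :=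
      (hconst.and h2).filter_mono nhdsWithin_le_nhds
    have h4 : ∀ᶠ z in 𝓝[≠] z₀, z ≠ z₀ := by
      have := self_mem_nhdsWithin (a := z₀) (s := {z₀}ᶜ)
      exact Filter.eventually_of_mem this (fun z hz => hz)
    obtain ⟨z, ⟨hgz, hzO⟩, hne⟩ := (h3.and h4).exists
    apply hne
    have e1 : f^[d] (g z) = z := (hg.2 z (hOW hzO)).2
    have e2 : f^[d] (g z₀) = z₀ := (hg.2 z₀ (hOW hz₀)).2
    rw [← e1, hgz, e2]
  · exact hle (Filter.image_mem_map (hO.mem_nhds hz₀))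


/-- Certified branches: built from the identity by composing (on `Y`) with
`Y`-contracting, `X`-anchored links. -/
inductive Cert (f : ℂ → ℂ) (U W X Y : Set ℂ) : ℕ → (ℂ → ℂ) → Prop
  | base (g : ℂ → ℂ) (hg : InvBranch f U W 0 g) : Cert f U W X Y 0 g
  | step (d' de d : ℕ) (b e c : ℂ → ℂ)
      (hb : Cert f U W X Y d' b) (hbB : InvBranch f U W d' b)
      (heB : InvBranch f U W de e) (heY : e '' Y ⊆ Y) (hea : ∃ y ∈ Y, e y ∈ X)
      (hcB : InvBranch f U W d c) (hd : d = d' + de)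
      (hce : ∀ y ∈ Y, c y = b (e y)) : Cert f U W X Y d c

lemma cert_good (hYW : Y ⊆ W) {d : ℕ} {c : ℂ → ℂ} (hc : Cert f U W X Y d c) :
    c '' Y ⊆ Y := by
  induction hc with
  | base g hg =>
    rintro _ ⟨y, hy, rfl⟩
    have h0 : g y = y := by simpa using (hg.2 y (hYW hy)).2
    rw [h0]; exact hy
  | step d' de d b e c hb hbB heB heY hea hcB hd hce ih =>
    rintro _ ⟨y, hy, rfl⟩
    rw [hce y hy]
    exact ih ⟨e y, heY ⟨y, hy, rfl⟩, rfl⟩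

section Main
variable (hU : IsOpen U) (hf : DifferentiableOn ℂ f U) (hW : IsOpen W)
  (hXY : X ⊆ Y) (hYW : Y ⊆ W) (hXopen : IsOpen X) (hXconn : IsConnected X)
  (hYopen : IsOpen Y) (hYconn : IsConnected Y) (hadm : AdmissiblePair f U W X Y)

include hU hf hW hXY hYW hYopen hYconn hadm in
/-- Rise: a branch at least as deep as a certified branch, meeting it with the certified-side
point in `X`, is certified. -/
lemma cert_rise {d' d : ℕ} {b c : ℂ → ℂ}
    (hbC : Cert f U W X Y d' b) (hbB : InvBranch f U W d' b) (hcB : InvBranch f U W d c)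
    (hle : d' ≤ d) {x x' : ℂ} (hx : x ∈ Y) (hx' : x' ∈ X) (h : c x = b x') :
    Cert f U W X Y d c := by
  set u : ℂ → ℂ := fun z => f^[d'] (c z) with hu
  have huB : InvBranch f U W (d - d') u := by
    apply branch_tail hU hf
    have : d' + (d - d') = d := by omega
    rw [this]; exact hcB
  have hux : u x = x' := by
    have hx'W : x' ∈ W := hYW (hXY hx')
    simp only [hu, h]
    exact (hbB.2 x' hx'W).2
  have huY : u '' Y ⊆ Y := by
    apply hadm _ u huB
    exact ⟨x', ⟨⟨x, hx, hux⟩, hx'⟩⟩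
  have huyW : ∀ y ∈ Y, u y ∈ W := fun y hy => hYW (huY ⟨y, hy, rfl⟩)
  have hψ : DifferentiableOn ℂ (fun y => b (u y)) Y :=
    hbB.1.comp (huB.1.mono hYW) (fun y hy => huyW y hy)
  have hψr : ∀ t ∈ Y, f^[d] (b (u t)) = t := by
    intro t ht
    have hsplit : d = (d - d') + d' := by omega
    rw [hsplit, Function.iterate_add_apply]
    rw [(hbB.2 (u t) (huyW t ht)).2]
    exact (huB.2 t (hYW ht)).2
  have heq : EqOn c (fun y => b (u y)) Y := by
    apply eqOn_of_rightInv hU hf hW hcB hYopen hYconn.isPreconnected hYW hψ hψr hx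
    simp only [hux, h]
  exact Cert.step d' (d - d') d b u c hbC hbB huB huY ⟨x, hx, by rw [hux]; exact hx'⟩ hcB
    (by omega) (fun y hy => heq hy)

include hU hf hW hXY hYW hXopen hYopen hYconn hadm in
/-- Drop: a branch strictly shallower than a certified branch, meeting it with its
own point in `X`, is certified. -/
lemma cert_drop {d' : ℕ} {b : ℂ → ℂ} (hbC : Cert f U W X Y d' b) :
    ∀ (d : ℕ) (c : ℂ → ℂ), InvBranch f U W d c → d < d' →
      ∀ x ∈ X, ∀ y' ∈ Y, c x = b y' → Cert f U W X Y d c := by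
  induction hbC with
  | base g hg => intro d c _ hlt; omega
  | step db' de d₀ b' e b₀ hb' hbB' heB heY hea hcB₀ hd₀ hce ih =>
    intro d c hcB hlt x hx y' hy' h
    have hxY : x ∈ Y := hXY hx
    have hxW : x ∈ W := hYW hxY
    have hy'W : y' ∈ W := hYW hy'
    have heyY : e y' ∈ Y := heY ⟨y', hy', rfl⟩
    have heyW : e y' ∈ W := hYW heyY
    have hby' : b₀ y' = b' (e y') := hce y' hy'
    by_cases hdd : d < db'
    · exact ih d c hcB hdd x hx (e y') heyY (by rw [h, hby'])
    · push_neg at hdd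
      -- db' ≤ d < db' + de
      have hade : d - db' < de := by omega
      set a := d - db' with ha
      set u : ℂ → ℂ := fun z => f^[db'] (c z) with hudef
      have huB : InvBranch f U W a u := by
        apply branch_tail hU hf
        have : db' + a = d := by omega
        rw [this]; exact hcB
      have hux : u x = e y' := by
        simp only [hudef, h, hby']
        exact (hbB'.2 (e y') heyW).2
      set v : ℂ → ℂ := fun z => f^[a] (e z) with hvdef
      have hvB : InvBranch f U W (de - a) v := by
        apply branch_tail hU hf
        have : a + (de - a) = de := by omega
        rw [this]; exact heB
      have hvy' : v y' = x := by
        simp only [hvdef, ← hux]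
        exact (huB.2 x hxW).2
      have hvY : v '' Y ⊆ Y := hadm _ v hvB ⟨x, ⟨⟨y', hy', hvy'⟩, hx⟩⟩
      have hvyW : ∀ y ∈ Y, v y ∈ W := fun y hy => hYW (hvY ⟨y, hy, rfl⟩)
      -- identity A : e = u ∘ v on Y
      have hψA : DifferentiableOn ℂ (fun y => u (v y)) Y :=
        huB.1.comp (hvB.1.mono hYW) (fun y hy => hvyW y hy)
      have hψAr : ∀ t ∈ Y, f^[de] (u (v t)) = t := by
        intro t ht
        have hsplit : de = (de - a) + a := by omega
        rw [hsplit, Function.iterate_add_apply]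
        rw [(huB.2 (v t) (hvyW t ht)).2]
        exact (hvB.2 t (hYW ht)).2
      have heqA : EqOn e (fun y => u (v y)) Y := by
        apply eqOn_of_rightInv hU hf hW heB hYopen hYconn.isPreconnected hYW hψA hψAr hy'
        simp only [hvy', hux]
      -- trigger for u
      obtain ⟨ys, hys, hysX⟩ := hea
      have hvysY : v ys ∈ Y := hvY ⟨ys, hys, rfl⟩
      have huvys : u (v ys) = e ys := (heqA hys).symm
      have huY : u '' Y ⊆ Y := hadm _ u huB ⟨e ys, ⟨⟨v ys, hvysY, huvys⟩, hysX⟩⟩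
      have huyW : ∀ y ∈ Y, u y ∈ W := fun y hy => hYW (huY ⟨y, hy, rfl⟩)
      -- identity B : c = b' ∘ u on Y
      have hψB : DifferentiableOn ℂ (fun y => b' (u y)) Y :=
        hbB'.1.comp (huB.1.mono hYW) (fun y hy => huyW y hy)
      have hψBr : ∀ t ∈ Y, f^[d] (b' (u t)) = t := by
        intro t ht
        have hsplit : d = a + db' := by omega
        rw [hsplit, Function.iterate_add_apply]
        rw [(hbB'.2 (u t) (huyW t ht)).2]
        exact (huB.2 t (hYW ht)).2
      have heqB : EqOn c (fun y => b' (u y)) Y := by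
        apply eqOn_of_rightInv hU hf hW hcB hYopen hYconn.isPreconnected hYW hψB hψBr hxY
        simp only [hux, ← hby', ← h]
      exact Cert.step db' a d b' u c hb' hbB' huB huY
        ⟨v ys, hvysY, by rw [huvys]; exact hysX⟩ hcB (by omega) (fun y hy => heqB hy)

include hU hf hW hXY hYW hXopen hYopen hYconn hadm in
/-- Attach: a branch meeting a certified branch at a common point of copies of `X`
is itself certified. -/
lemma cert_attach {d' d : ℕ} {b c : ℂ → ℂ}
    (hbC : Cert f U W X Y d' b) (hbB : InvBranch f U W d' b) (hcB : InvBranch f U W d c)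
    {x x' : ℂ} (hx : x ∈ X) (hx' : x' ∈ X) (h : c x = b x') :
    Cert f U W X Y d c := by
  rcases le_or_gt d' d with hle | hlt
  · exact cert_rise hU hf hW hXY hYW hYopen hYconn hadm hbC hbB hcB hle (hXY hx) hx' h
  · exact cert_drop hU hf hW hXY hYW hXopen hYopen hYconn hadm hbC d c hcB hlt x hx x'
      (hXY hx') h

end Main

end IBAux

open IBAux in
theorem connected_union_of_copies_in_min_depth_copy
    (f : ℂ → ℂ) (U : Set ℂ) (hU : IsOpen U) (hf : DifferentiableOn ℂ f U)
    (W : Set ℂ) (hW : IsOpen W)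
    (X Y : Set ℂ) (hXY : X ⊆ Y) (hYW : Y ⊆ W)
    (hXopen : IsOpen X) (hXconn : IsConnected X)
    (hYopen : IsOpen Y) (hYconn : IsConnected Y)
    (hadm : AdmissiblePair f U W X Y)
    (I : Type) (hI : Nonempty I) (g : I → ℂ → ℂ) (k : I → ℕ)
    (hg : ∀ i, InvBranch f U W (k i) (g i))
    (hD : IsConnected (⋃ i, g i '' X))
    (i₀ : I) (hmin : ∀ i, k i₀ ≤ k i) :
    (⋃ i, g i '' X) ⊆ g i₀ '' Y := by
  have hXW : X ⊆ W := fun x hx => hYW (hXY hx)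
  set k₀ := k i₀ with hk₀
  set D := ⋃ i, g i '' X with hDdef
  set H : I → ℂ → ℂ := fun i z => f^[k₀] (g i z) with hHdef
  have hH : ∀ i, InvBranch f U W (k i - k₀) (H i) := by
    intro i
    apply branch_tail hU hf
    have : k₀ + (k i - k₀) = k i := by have := hmin i; omega
    rw [this]; exact hg i
  have hHi₀ : ∀ z ∈ W, H i₀ z = z := fun z hz => (hg i₀).2 z hz |>.2
  -- the pushed-forward union E
  have hDV : D ⊆ goodSet f U k₀ := by
    rintro z hz
    obtain ⟨i, hi⟩ := mem_iUnion.mp hz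
    obtain ⟨x, hx, rfl⟩ := hi
    exact goodSet_antitone (hmin i) (branch_mem_goodSet (hg i) (hXW hx))
  set E := ⋃ i, H i '' X with hEdef
  have hEeq : f^[k₀] '' D = E := by
    rw [hDdef, image_iUnion]
    apply iUnion_congr
    intro i
    exact image_image _ _ _
  have hEconn : IsConnected E := by
    rw [← hEeq]
    exact hD.image _ ((goodSet_isOpen_diff hU hf k₀).2.continuousOn.mono hDV)
  obtain ⟨x₀, hx₀⟩ := hXconn.nonempty
  -- every piece of E is certified
  have hcert : ∀ i, Cert f U W X Y (k i - k₀) (H i) := by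
    by_contra hnot
    push_neg at hnot
    obtain ⟨j, hj⟩ := hnot
    set u := ⋃ (p : ℕ × (ℂ → ℂ)) (_ : InvBranch f U W p.1 p.2 ∧ Cert f U W X Y p.1 p.2),
      p.2 '' X with hudef
    set v := ⋃ (i : I) (_ : ¬ Cert f U W X Y (k i - k₀) (H i)), H i '' X with hvdef
    have hu : IsOpen u := isOpen_iUnion fun p => isOpen_iUnion fun hp =>
      branch_image_isOpen hU hf hW hp.1 hXopen hXW
    have hv : IsOpen v := isOpen_iUnion fun i => isOpen_iUnion fun _ =>
      branch_image_isOpen hU hf hW (hH i) hXopen hXW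
    have hcover : E ⊆ u ∪ v := by
      rintro z hz
      obtain ⟨i, hi⟩ := mem_iUnion.mp hz
      by_cases hc : Cert f U W X Y (k i - k₀) (H i)
      · left
        exact mem_iUnion.mpr ⟨(k i - k₀, H i), mem_iUnion.mpr ⟨⟨hH i, hc⟩, hi⟩⟩
      · right
        exact mem_iUnion.mpr ⟨i, mem_iUnion.mpr ⟨hc, hi⟩⟩
    have hi₀B : InvBranch f U W 0 (H i₀) := by
      have h0 : k₀ + 0 = k i₀ := by omega
      have := branch_tail hU hf (t := k₀) (e := 0) (g := g i₀) (by rw [h0]; exact hg i₀)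
      exact this
    have hi₀C : Cert f U W X Y 0 (H i₀) := Cert.base _ hi₀B
    have hEu : (E ∩ u).Nonempty := by
      refine ⟨H i₀ x₀, mem_iUnion.mpr ⟨i₀, ⟨x₀, hx₀, rfl⟩⟩, ?_⟩
      exact mem_iUnion.mpr ⟨(0, H i₀), mem_iUnion.mpr ⟨⟨hi₀B, hi₀C⟩, ⟨x₀, hx₀, rfl⟩⟩⟩
    have hEv : (E ∩ v).Nonempty := by
      refine ⟨H j x₀, mem_iUnion.mpr ⟨j, ⟨x₀, hx₀, rfl⟩⟩, ?_⟩
      exact mem_iUnion.mpr ⟨j, mem_iUnion.mpr ⟨hj, ⟨x₀, hx₀, rfl⟩⟩⟩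
    obtain ⟨z, _, hzu, hzv⟩ := hEconn.isPreconnected u v hu hv hcover hEu hEv
    obtain ⟨p, hp⟩ := mem_iUnion.mp hzu
    obtain ⟨⟨hpB, hpC⟩, x', hx', hpz⟩ := mem_iUnion.mp hp
    obtain ⟨j', hj'⟩ := mem_iUnion.mp hzv
    obtain ⟨hj'n, x, hx, hj'z⟩ := mem_iUnion.mp hj'
    exact hj'n (cert_attach hU hf hW hXY hYW hXopen hYopen hYconn hadm hpC hpB (hH j')
      hx hx' (hj'z.trans hpz.symm))
  -- hence E ⊆ Y
  have hHXY : ∀ i, H i '' X ⊆ Y := by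
    intro i
    rintro _ ⟨x, hx, rfl⟩
    exact cert_good hYW (hcert i) ⟨x, hXY hx, rfl⟩
  -- final propagation on D
  set P : I → Prop := fun i => ∀ x ∈ X, g i₀ (H i x) = g i x with hPdef
  have hPi₀ : P i₀ := fun x hx => by rw [hHi₀ x (hXW hx)]
  have hPgood : ∀ i, P i → g i '' X ⊆ g i₀ '' Y := by
    rintro i hPi _ ⟨x, hx, rfl⟩
    exact ⟨H i x, hHXY i ⟨x, hx, rfl⟩, hPi x hx⟩
  -- propagate P along D
  set u2 := ⋃ (i : I) (_ : P i), g i '' X with hu2def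
  set v2 := ⋃ (i : I) (_ : ¬ P i), g i '' X with hv2def
  have hu2 : IsOpen u2 := isOpen_iUnion fun i => isOpen_iUnion fun _ =>
    branch_image_isOpen hU hf hW (hg i) hXopen hXW
  have hv2 : IsOpen v2 := isOpen_iUnion fun i => isOpen_iUnion fun _ =>
    branch_image_isOpen hU hf hW (hg i) hXopen hXW
  have hcover2 : D ⊆ u2 ∪ v2 := by
    rintro z hz
    obtain ⟨i, hi⟩ := mem_iUnion.mp hz
    by_cases hPi : P i
    · exact Or.inl (mem_iUnion.mpr ⟨i, mem_iUnion.mpr ⟨hPi, hi⟩⟩)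
    · exact Or.inr (mem_iUnion.mpr ⟨i, mem_iUnion.mpr ⟨hPi, hi⟩⟩)
  have hDv2 : ¬ (D ∩ v2).Nonempty := by
    intro hDv2
    have hDu2 : (D ∩ u2).Nonempty :=
      ⟨g i₀ x₀, mem_iUnion.mpr ⟨i₀, ⟨x₀, hx₀, rfl⟩⟩,
        mem_iUnion.mpr ⟨i₀, mem_iUnion.mpr ⟨hPi₀, ⟨x₀, hx₀, rfl⟩⟩⟩⟩
    obtain ⟨z, _, hzu, hzv⟩ := hD.isPreconnected u2 v2 hu2 hv2 hcover2 hDu2 hDv2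
    obtain ⟨i, hi⟩ := mem_iUnion.mp hzu
    obtain ⟨hPi, x, hx, hiz⟩ := mem_iUnion.mp hi
    obtain ⟨j, hjm⟩ := mem_iUnion.mp hzv
    obtain ⟨hPj, x', hx', hjz⟩ := mem_iUnion.mp hjm
    apply hPj
    -- derive P j
    have hHj : H j x' = H i x := by
      show f^[k₀] (g j x') = f^[k₀] (g i x)
      rw [hjz, hiz]
    have hagree : g i₀ (H j x') = g j x' := by
      rw [hHj, hPi x hx, hiz, hjz]
    have hψ : DifferentiableOn ℂ (fun x => g i₀ (H j x)) X :=
      (hg i₀).1.comp ((hH j).1.mono hXW) (fun x hx => hYW (hHXY j ⟨x, hx, rfl⟩))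
    have hψr : ∀ x ∈ X, f^[k j] (g i₀ (H j x)) = x := by
      intro x hx
      have hsplit : k j = (k j - k₀) + k₀ := by have := hmin j; omega
      rw [hsplit, Function.iterate_add_apply]
      have h1 : f^[k₀] (g i₀ (H j x)) = H j x := (hg i₀).2 _ (hYW (hHXY j ⟨x, hx, rfl⟩)) |>.2
      rw [h1]
      exact ((hH j).2 x (hXW hx)).2
    have heq : EqOn (g j) (fun x => g i₀ (H j x)) X :=
      eqOn_of_rightInv hU hf hW (hg j) hXopen hXconn.isPreconnected hXW hψ hψr hx' hagree
    intro x hx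
    exact (heq hx).symm
  -- conclude
  rintro z hz
  have hzD : z ∈ D := hz
  rcases hcover2 hzD with hzu | hzv
  · obtain ⟨i, hi⟩ := mem_iUnion.mp hzu
    obtain ⟨hPi, hzi⟩ := mem_iUnion.mp hi
    exact hPgood i hPi hzi
  · exact absurd ⟨z, hzD, hzv⟩ hDv2
end
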